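/- For every positive integer n, R(W_7, K_n) ≥ 2·R(K_4 − e, K_n) − 1. -/

import Mathlib

open SimpleGraph

/-- `H` is contained in `G` as a subgraph. -/
def Contains {α β : Type*} (G : SimpleGraph α) (H : SimpleGraph β) : Prop :=
  ∃ f : H →g G, Function.Injective f

/-- Every red/blue coloring of `K_N` (red = `C`, blue = `Cᶜ`) has a red `G` or blue `H`. -/
def RamseyProp {α β : Type*} (N : ℕ) (G : SimpleGraph α) (H : SimpleGraph β) : Prop :=
  ∀ C : SimpleGraph (Fin N), Contains C G ∨ Contains Cᶜ H

/-- The Ramsey number `R(G, H)`. -/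
noncomputable def ramseyNumber {α β : Type*} (G : SimpleGraph α) (H : SimpleGraph β) : ℕ :=
  sInf {N | RamseyProp N G H}

/-- The join `G + H`: disjoint union plus all edges in between. -/
def graphJoin {α β : Type*} (G : SimpleGraph α) (H : SimpleGraph β) : SimpleGraph (α ⊕ β) :=
  SimpleGraph.fromRel (fun x y =>
    match x, y with
    | Sum.inl a, Sum.inl b => G.Adj a b
    | Sum.inr a, Sum.inr b => H.Adj a b
    | _, _ => True)

/-- The wheel `W_n = K_1 + C_{n-1}` on `n` vertices. -/
def wheel (n : ℕ) : SimpleGraph (Fin 1 ⊕ Fin (n - 1)) :=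
  graphJoin ⊥ (SimpleGraph.cycleGraph (n - 1))

/-- A perfect matching `k • K_2` on `2k` vertices. -/
def matching (k : ℕ) : SimpleGraph (Fin k × Fin 2) :=
  SimpleGraph.fromRel (fun x y => x.1 = y.1)

/-- The fan `F_k = K_1 + k • K_2`. -/
def fan (k : ℕ) : SimpleGraph (Fin 1 ⊕ Fin k × Fin 2) :=
  graphJoin ⊥ (matching k)

/-- The kipas `K̂_n = K_1 + P_{n-1}` on `n` vertices. -/
def kipas (n : ℕ) : SimpleGraph (Fin 1 ⊕ Fin (n - 1)) :=
  graphJoin ⊥ (SimpleGraph.pathGraph (n - 1))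

/-- The blow-up `G[K_2]`: each vertex replaced by an adjacent pair; vertices in
different pairs adjacent iff the original vertices are adjacent. -/
def blowUp {α : Type*} (G : SimpleGraph α) : SimpleGraph (α × Fin 2) :=
  SimpleGraph.fromRel (fun x y => x.1 = y.1 ∨ G.Adj x.1 y.1)


/-- The graph `K_4 - e`. -/
def K4e : SimpleGraph (Fin 4) := (⊤ : SimpleGraph (Fin 4)).deleteEdges {s(0, 1)}

/-!
Take a red/blue colouring `C` of `K_{R(K₄-e, Kₙ) - 1}` with no red `K₄ - e` and no blue `Kₙ`, and
blow every vertex up into a red pair. A blue clique meets each pair at most once, so it projects to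
a blue clique of `C`. In a red `W₇` of the blow-up with hub over `a`, at most one rim vertex lies
over `a`, so five consecutive rim vertices lie over red neighbours of `a`. As `C` has no red
`K₄ - e`, every red edge `ap` lies in at most one red triangle, so the red neighbourhood of `a` is a
matching; the five-vertex rim path is then trapped over one matched pair, which has only four
vertices above it.
-/

universe u

lemma contains_iff_isContained {α β : Type*} {G : SimpleGraph α} {H : SimpleGraph β} :
    Contains G H ↔ H ⊑ G :=
  ⟨fun ⟨f, hf⟩ => ⟨f.toCopy hf⟩, fun ⟨f⟩ => ⟨f.toHom, f.injective⟩⟩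

lemma ramseyProp_iff {α β : Type*} {N : ℕ} {G : SimpleGraph α} {H : SimpleGraph β} :
    RamseyProp N G H ↔ ∀ C : SimpleGraph (Fin N), G ⊑ C ∨ H ⊑ Cᶜ := by
  simp only [RamseyProp, contains_iff_isContained]

lemma RamseyProp.isContained_or {α β V : Type*} {N : ℕ} {G : SimpleGraph α} {H : SimpleGraph β}
    (h : RamseyProp N G H) (e : Fin N ↪ V) (D : SimpleGraph V) : G ⊑ D ∨ H ⊑ Dᶜ :=
  (ramseyProp_iff.mp h (D.comap e)).imp (·.trans (Embedding.comap e D).isContained)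
    (·.trans (Embedding.complEquiv (Embedding.comap e D)).isContained)

lemma RamseyProp.mono {α β : Type*} {N M : ℕ} {G : SimpleGraph α} {H : SimpleGraph β}
    (h : RamseyProp N G H) (hNM : N ≤ M) : RamseyProp M G H :=
  ramseyProp_iff.mpr (h.isContained_or (Fin.castLEEmb hNM))

theorem exists_isNClique_or_isNClique_compl (s t : ℕ) :
    ∃ N, ∀ {V : Type u} [DecidableEq V] (G : SimpleGraph V) (A : Finset V), N ≤ A.card →
      (∃ c ⊆ A, G.IsNClique s c) ∨ ∃ c ⊆ A, Gᶜ.IsNClique t c := by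
  induction s generalizing t with
  | zero => exact ⟨0, fun _ _ _ => Or.inl ⟨∅, by simp⟩⟩
  | succ s ihs =>
    induction t with
    | zero => exact ⟨0, fun _ _ _ => Or.inr ⟨∅, by simp⟩⟩
    | succ t iht =>
      obtain ⟨N₁, h₁⟩ := ihs (t + 1)
      obtain ⟨N₂, h₂⟩ := iht
      refine ⟨N₁ + N₂ + 1, fun {V} _ G A hA => ?_⟩
      obtain ⟨v, hv⟩ : A.Nonempty := Finset.card_pos.mp (by omega)
      classical
      set B := (A.erase v).filter (G.Adj v)
      set B' := (A.erase v).filter (fun w => ¬G.Adj v w)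
      have hBA : B ⊆ A := (Finset.filter_subset _ _).trans (Finset.erase_subset _ _)
      have hB'A : B' ⊆ A := (Finset.filter_subset _ _).trans (Finset.erase_subset _ _)
      have hcard : B.card + B'.card + 1 = A.card := by
        rw [Finset.card_filter_add_card_filter_not, Finset.card_erase_add_one hv]
      by_cases hB : N₁ ≤ B.card
      · rcases h₁ G B hB with ⟨c, hcB, hc⟩ | ⟨c, hcB, hc⟩
        · refine Or.inl ⟨insert v c, Finset.insert_subset hv (hcB.trans hBA), hc.insert ?_⟩
          exact fun w hw => (Finset.mem_filter.mp (hcB hw)).2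
        · exact Or.inr ⟨c, hcB.trans hBA, hc⟩
      · rcases h₂ G B' (by omega) with ⟨c, hcB, hc⟩ | ⟨c, hcB, hc⟩
        · exact Or.inl ⟨c, hcB.trans hB'A, hc⟩
        · refine Or.inr ⟨insert v c, Finset.insert_subset hv (hcB.trans hB'A), hc.insert ?_⟩
          intro w hw
          obtain ⟨hw, hvw⟩ := Finset.mem_filter.mp (hcB hw)
          exact (compl_adj G v w).mpr ⟨(Finset.ne_of_mem_erase hw).symm, hvw⟩

lemma exists_ramseyProp_top (s t : ℕ) :
    ∃ N, RamseyProp N (⊤ : SimpleGraph (Fin s)) (⊤ : SimpleGraph (Fin t)) := by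
  obtain ⟨N, hN⟩ := exists_isNClique_or_isNClique_compl.{0} s t
  refine ⟨N, ramseyProp_iff.mpr fun C => ?_⟩
  simp only [← not_cliqueFree_iff_top_isContained]
  rcases hN C Finset.univ (by simp) with ⟨c, -, hc⟩ | ⟨c, -, hc⟩
  exacts [Or.inl hc.not_cliqueFree, Or.inr hc.not_cliqueFree]

lemma exists_ramseyProp {α β : Type*} [Fintype α] [Fintype β] (G : SimpleGraph α)
    (H : SimpleGraph β) : ∃ N, RamseyProp N G H := by
  obtain ⟨N, hN⟩ := exists_ramseyProp_top (Fintype.card α) (Fintype.card β)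
  refine ⟨N, ramseyProp_iff.mpr fun C => ?_⟩
  have hα : G ⊑ (⊤ : SimpleGraph (Fin (Fintype.card α))) :=
    isContained_top_iff.mpr ⟨(Fintype.equivFin α).toEmbedding⟩
  have hβ : H ⊑ (⊤ : SimpleGraph (Fin (Fintype.card β))) :=
    isContained_top_iff.mpr ⟨(Fintype.equivFin β).toEmbedding⟩
  exact (ramseyProp_iff.mp hN C).imp hα.trans hβ.trans

-- Without `exists_ramseyProp`, `ramseyNumber G H` would be the junk value `sInf ∅ = 0`.
lemma ramseyProp_ramseyNumber {α β : Type*} [Fintype α] [Fintype β] (G : SimpleGraph α)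
    (H : SimpleGraph β) : RamseyProp (ramseyNumber G H) G H :=
  Nat.sInf_mem (exists_ramseyProp G H)

lemma lt_ramseyNumber_of_not_ramseyProp {α β : Type*} [Fintype α] [Fintype β] {N : ℕ}
    {G : SimpleGraph α} {H : SimpleGraph β} (h : ¬RamseyProp N G H) : N < ramseyNumber G H :=
  lt_of_not_ge fun hle => h ((ramseyProp_ramseyNumber G H).mono hle)

lemma not_ramseyProp_of_lt_ramseyNumber {α β : Type*} {N : ℕ} {G : SimpleGraph α}
    {H : SimpleGraph β} (h : N < ramseyNumber G H) : ¬RamseyProp N G H :=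
  Nat.notMem_of_lt_sInf h

section BlowUp

variable {α : Type*} {C : SimpleGraph α}

lemma blowUp_adj {x y : α × Fin 2} :
    (blowUp C).Adj x y ↔ x ≠ y ∧ (x.1 = y.1 ∨ C.Adj x.1 y.1) := by
  simp only [blowUp, fromRel_adj, eq_comm (a := y.1), C.adj_comm y.1, or_self]

lemma top_isContained_compl_of_blowUp {β : Type*} (h : (⊤ : SimpleGraph β) ⊑ (blowUp C)ᶜ) :
    (⊤ : SimpleGraph β) ⊑ Cᶜ := by
  obtain ⟨f⟩ := h
  let g : (⊤ : SimpleGraph β) →g Cᶜ := ⟨fun b => (f b).1, fun {b b'} hbb' => by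
    have hf := f.toHom.map_adj hbb'
    simp only [compl_adj, blowUp_adj, not_and, not_or] at hf ⊢
    exact hf.2 hf.1⟩
  exact ⟨g.toCopy g.injective_of_top_hom⟩

lemma eq_of_fst_eq_of_ne {x y z : α × Fin 2} (hxy : x ≠ y) (hxz : x ≠ z) (h₁ : x.1 = y.1)
    (h₂ : x.1 = z.1) : y = z := by
  have : x.2 ≠ y.2 := fun h => hxy (Prod.ext h₁ h)
  have : x.2 ≠ z.2 := fun h => hxz (Prod.ext h₂ h)
  exact Prod.ext (h₁.symm.trans h₂) (by omega)

end BlowUp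

lemma K4e_isContained_of_adj {α : Type*} {C : SimpleGraph α} {a x y z : α} (hax : C.Adj a x)
    (hay : C.Adj a y) (haz : C.Adj a z) (hxy : C.Adj x y) (hyz : C.Adj y z) (hxz : x ≠ z) :
    K4e ⊑ C := by
  let f : K4e →g C := ⟨![x, z, a, y], fun {i j} hij => by
    simp only [K4e, deleteEdges_adj, top_adj, Set.mem_singleton_iff, Sym2.eq_iff] at hij
    fin_cases i <;> fin_cases j <;> simp_all [C.adj_comm]⟩
  refine ⟨f.toCopy fun i j hij => by_contra fun hne => ?_⟩
  have hnadj : ¬K4e.Adj i j := fun h => (f.map_adj h).ne hij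
  have h01 : (i = 0 ∧ j = 1) ∨ (i = 1 ∧ j = 0) := by
    simp only [K4e, deleteEdges_adj, top_adj, Set.mem_singleton_iff, Sym2.eq_iff] at hnadj
    tauto
  rcases h01 with ⟨rfl, rfl⟩ | ⟨rfl, rfl⟩
  exacts [hxz hij, hxz hij.symm]

section K4eFree

variable {α : Type*} {C : SimpleGraph α}

lemma eq_of_adj_of_K4e_free (hC : ¬K4e ⊑ C) {a x y z : α} (hax : C.Adj a x) (hay : C.Adj a y)
    (haz : C.Adj a z) (hxy : C.Adj x y) (hyz : C.Adj y z) : x = z :=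
  by_contra fun hxz => hC (K4e_isContained_of_adj hax hay haz hxy hyz hxz)

lemma eq_or_adj_of_chain (hC : ¬K4e ⊑ C) {a : α} {m : ℕ} (p : ℕ → α)
    (hp : ∀ i ≤ m, C.Adj a (p i)) (hstep : ∀ i < m, p i = p (i + 1) ∨ C.Adj (p i) (p (i + 1))) :
    ∀ i ≤ m, p i = p 0 ∨ C.Adj (p 0) (p i) := by
  intro i hi
  induction i with
  | zero => exact Or.inl rfl
  | succ i ih =>
    rcases ih (by omega) with h0 | h0 <;> rcases hstep i (by omega) with hs | hs
    · exact Or.inl (hs.symm.trans h0)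
    · exact Or.inr (by rwa [← h0])
    · exact Or.inr (by rwa [← hs])
    · exact Or.inl (eq_of_adj_of_K4e_free hC (hp 0 (by omega)) (hp i (by omega)) (hp (i + 1) hi)
        h0 hs).symm

lemma card_le_four_of_K4e_free (hC : ¬K4e ⊑ C) {ι : Type*} [Fintype ι] {a p : α}
    (hap : C.Adj a p) (u : ι → α × Fin 2) (hu : Function.Injective u)
    (hua : ∀ i, C.Adj a (u i).1) (hup : ∀ i, (u i).1 = p ∨ C.Adj p (u i).1) :
    Fintype.card ι ≤ 4 := by
  classical
  -- `p` has at most one neighbour in `N(a)`, so `(u i).1` is determined by whether it equals `p`.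
  have key : Function.Injective fun i => (decide ((u i).1 = p), (u i).2) := by
    intro i j hij
    simp only [Prod.mk.injEq, decide_eq_decide] at hij
    refine hu (Prod.ext ?_ hij.2)
    rcases hup i with hi | hi <;> rcases hup j with hj | hj
    · exact hi.trans hj.symm
    · exact absurd (hij.1.mp hi) hj.ne'
    · exact absurd (hij.1.mpr hj) hi.ne'
    · exact eq_of_adj_of_K4e_free hC (hua i) hap (hua j) hi.symm hj
  simpa using Fintype.card_le_of_injective _ key

end K4eFree

lemma wheel_adj_hub_rim (k : Fin 6) : (wheel 7).Adj (Sum.inl 0) (Sum.inr k) := by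
  simp [wheel, graphJoin]

lemma wheel_adj_rim_succ (k : Fin 6) : (wheel 7).Adj (Sum.inr k) (Sum.inr (k + 1)) := by
  simp [wheel, graphJoin, cycleGraph_adj']

open Fin.NatCast in
lemma not_wheel_isContained_blowUp {α : Type*} {C : SimpleGraph α} (hC : ¬K4e ⊑ C) :
    ¬wheel 7 ⊑ blowUp C := by
  rintro ⟨f⟩
  set a := (f (Sum.inl 0)).1
  set rim : Fin 6 → α × Fin 2 := fun k => f (Sum.inr k)
  have hrim_hub (k : Fin 6) : (rim k).1 = a ∨ C.Adj a (rim k).1 :=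
    (blowUp_adj.mp (f.toHom.map_adj (wheel_adj_hub_rim k))).2.imp Eq.symm id
  have hrim_succ (k : Fin 6) : (rim k).1 = (rim (k + 1)).1 ∨ C.Adj (rim k).1 (rim (k + 1)).1 :=
    (blowUp_adj.mp (f.toHom.map_adj (wheel_adj_rim_succ k))).2
  obtain ⟨k₀, hk₀⟩ : ∃ k₀, ∀ k ≠ k₀, (rim k).1 ≠ a := by
    by_cases h : ∃ k₀, (rim k₀).1 = a
    · obtain ⟨k₀, hk₀⟩ := h
      refine ⟨k₀, fun k hk hka => hk ?_⟩
      have hne (k : Fin 6) : f (Sum.inl 0) ≠ rim k := fun h => Sum.inl_ne_inr (f.injective h)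
      exact Sum.inr_injective (f.injective
        (eq_of_fst_eq_of_ne (hne k) (hne k₀) hka.symm hk₀.symm))
    · exact ⟨0, fun k _ => not_exists.mp h k⟩
  let p : ℕ → α := fun i => (rim (k₀ + 1 + (i : Fin 6))).1
  have hp (i : ℕ) (hi : i ≤ 4) : C.Adj a (p i) := by
    refine (hrim_hub _).resolve_left (hk₀ _ fun h => ?_)
    have hval := congrArg Fin.val h
    simp only [Fin.isValue, Fin.val_add, Fin.coe_ofNat_eq_mod, Nat.one_mod, Fin.val_natCast,
      Nat.add_mod_mod, Nat.mod_add_mod] at hval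
    omega
  have hchain := eq_or_adj_of_chain hC p hp fun i _ => by
    simpa [p, Nat.cast_succ, add_assoc] using hrim_succ (k₀ + 1 + (i : Fin 6))
  refine absurd (card_le_four_of_K4e_free hC (hp 0 (by omega))
    (fun i : Fin 5 => rim (k₀ + 1 + ((i : ℕ) : Fin 6))) (fun i j hij => ?_)
    (fun i => hp i (by omega)) (fun i => hchain i (by omega))) (by simp)
  have hval := congrArg Fin.val (add_left_cancel (Sum.inr_injective (f.injective hij)))
  simp only [Fin.val_natCast] at hval
  exact Fin.ext (by omega)

theorem stmt_5_general (n : ℕ) :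
    2 * ramseyNumber K4e (⊤ : SimpleGraph (Fin n)) - 1 ≤
      ramseyNumber (wheel 7) (⊤ : SimpleGraph (Fin n)) := by
  set m := ramseyNumber K4e (⊤ : SimpleGraph (Fin n))
  rcases Nat.eq_zero_or_pos m with hm | hm
  · omega
  obtain ⟨C, hK4e, hKn⟩ : ∃ C : SimpleGraph (Fin (m - 1)), ¬K4e ⊑ C ∧ ¬⊤ ⊑ Cᶜ := by
    simpa [ramseyProp_iff] using not_ramseyProp_of_lt_ramseyNumber (Nat.sub_lt hm one_pos)
  have hblowUp : ¬RamseyProp (2 * (m - 1)) (wheel 7) (⊤ : SimpleGraph (Fin n)) := fun h =>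
    (h.isContained_or (finProdFinEquiv.trans (finCongr (mul_comm _ _))).symm.toEmbedding
      (blowUp C)).elim (not_wheel_isContained_blowUp hK4e)
      (hKn ∘ top_isContained_compl_of_blowUp)
  have hlt := lt_ramseyNumber_of_not_ramseyProp hblowUp
  omega

theorem stmt_5 (n : ℕ) (hn : 1 ≤ n) :
    2 * ramseyNumber K4e (⊤ : SimpleGraph (Fin n)) - 1 ≤
      ramseyNumber (wheel 7) (⊤ : SimpleGraph (Fin n)) :=
  stmt_5_general n
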